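/- arXiv:2104.14204 — 6 statements merged into one kernel-verified Lean document; each statement's English description precedes it below -/
import Mathlib

section
/- Suppose 0 ≤ v₁ ≤ v₂ ≤ v₃ ≤ v₄ and τ_DA, τ_IA > 0. Define T(b₀) = τ_DA|b₀| + (τ_IA/4)·Σᵢ₌₁⁴ |vᵢ − b₀|. If τ_DA ≤ τ_IA < 2τ_DA, then b₀ = v₁ is a global minimizer of T. -/
theorem tcmin_case_v1
    (τDA τIA : ℝ) (v1 v2 v3 v4 : ℝ)
    (hv0 : 0 ≤ v1) (hv1 : v1 ≤ v2) (hv2 : v2 ≤ v3) (hv3 : v3 ≤ v4)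
    (hDA : 0 < τDA) (hIA : 0 < τIA)
    (hle : τDA ≤ τIA) (hlt : τIA < 2 * τDA) :
    ∀ x : ℝ,
      τDA * |v1| + (τIA/4) * (|v1 - v1| + |v2 - v1| + |v3 - v1| + |v4 - v1|)
        ≤ τDA * |x| + (τIA/4) * (|v1 - x| + |v2 - x| + |v3 - x| + |v4 - x|) := by
  intro x
  rw [abs_of_nonneg hv0, sub_self, abs_zero,
    abs_of_nonneg (by linarith : (0:ℝ) ≤ v2 - v1),
    abs_of_nonneg (by linarith : (0:ℝ) ≤ v3 - v1),
    abs_of_nonneg (by linarith : (0:ℝ) ≤ v4 - v1)]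
  have hx : x ≤ |x| := le_abs_self x
  have h2 : v2 - x ≤ |v2 - x| := le_abs_self _
  have h3 : v3 - x ≤ |v3 - x| := le_abs_self _
  have h4 : v4 - x ≤ |v4 - x| := le_abs_self _
  rcases le_total x v1 with h | h
  · have h1 : v1 - x ≤ |v1 - x| := le_abs_self _
    nlinarith
  · have h1 : x - v1 ≤ |v1 - x| := by rw [abs_sub_comm]; exact le_abs_self _
    nlinarith
end

section
/- Suppose 0 ≤ v₁ ≤ v₂ ≤ v₃ ≤ v₄ and τ_DA, τ_IA > 0. Define T(b₀) = τ_DA|b₀| + (τ_IA/4)·Σᵢ₌₁⁴ |vᵢ − b₀|. If 2τ_DA ≤ τ_IA, then b₀ = v₂ is a global minimizer of T. -/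
theorem tcmin_case_v2
    (τDA τIA : ℝ) (v1 v2 v3 v4 : ℝ)
    (hv0 : 0 ≤ v1) (hv1 : v1 ≤ v2) (hv2 : v2 ≤ v3) (hv3 : v3 ≤ v4)
    (hDA : 0 < τDA) (hIA : 0 < τIA)
    (h2 : 2 * τDA ≤ τIA) :
    ∀ x : ℝ,
      τDA * |v2| + (τIA/4) * (|v1 - v2| + |v2 - v2| + |v3 - v2| + |v4 - v2|)
        ≤ τDA * |x| + (τIA/4) * (|v1 - x| + |v2 - x| + |v3 - x| + |v4 - x|) := by
  intro x
  have a2 : |v2| = v2 := abs_of_nonneg (hv0.trans hv1)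
  have b1 : |v1 - v2| = v2 - v1 := by rw [abs_sub_comm]; exact abs_of_nonneg (by linarith)
  have b2 : |v2 - v2| = 0 := by simp
  have b3 : |v3 - v2| = v3 - v2 := abs_of_nonneg (by linarith)
  have b4 : |v4 - v2| = v4 - v2 := abs_of_nonneg (by linarith)
  rcases le_or_gt v2 x with hx | hx
  · have ax : |x| = x := abs_of_nonneg (by linarith)
    have c1 : |v1 - x| = x - v1 := by rw [abs_sub_comm]; exact abs_of_nonneg (by linarith)
    have c2 : |v2 - x| = x - v2 := by rw [abs_sub_comm]; exact abs_of_nonneg (by linarith)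
    have c3 : v3 - x ≤ |v3 - x| := le_abs_self _
    have c4 : v4 - x ≤ |v4 - x| := le_abs_self _
    rw [a2, b1, b2, b3, b4, ax, c1, c2]
    nlinarith
  · have c1 : x - v1 ≤ |v1 - x| := by rw [abs_sub_comm]; exact le_abs_self _
    have c2 : |v2 - x| = v2 - x := abs_of_nonneg (by linarith)
    have c3 : |v3 - x| = v3 - x := abs_of_nonneg (by linarith)
    have c4 : |v4 - x| = v4 - x := abs_of_nonneg (by linarith)
    have d : |v2| - |x| ≤ v2 - x := by
      have := abs_sub_abs_le_abs_sub v2 x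
      have h' : |v2 - x| = v2 - x := abs_of_nonneg (by linarith)
      linarith
    rw [a2, b1, b2, b3, b4, c2, c3, c4]
    nlinarith
end

section
/- Suppose 0 ≤ v₁ ≤ v₂ ≤ v₃ ≤ v₄ and τ_DA > τ_IA > 0. Define T(b₀) = τ_DA|b₀| + (τ_IA/4)·Σᵢ₌₁⁴ |vᵢ − b₀|. Then b₀ = 0 is a global minimizer of T. -/
theorem tcmin_case_zero
    (τDA τIA : ℝ) (v1 v2 v3 v4 : ℝ)
    (hv0 : 0 ≤ v1) (hv1 : v1 ≤ v2) (hv2 : v2 ≤ v3) (hv3 : v3 ≤ v4)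
    (hIA : 0 < τIA) (hgt : τIA < τDA) :
    ∀ x : ℝ,
      τDA * |(0:ℝ)| + (τIA/4) * (|v1 - 0| + |v2 - 0| + |v3 - 0| + |v4 - 0|)
        ≤ τDA * |x| + (τIA/4) * (|v1 - x| + |v2 - x| + |v3 - x| + |v4 - x|) := by
  intro x
  have h0 : |(0:ℝ)| = 0 := abs_zero
  have a1 : |v1 - 0| = v1 := by rw [sub_zero]; exact abs_of_nonneg hv0
  have a2 : |v2 - 0| = v2 := by rw [sub_zero]; exact abs_of_nonneg (hv0.trans hv1)
  have a3 : |v3 - 0| = v3 := by rw [sub_zero]; exact abs_of_nonneg ((hv0.trans hv1).trans hv2)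
  have a4 : |v4 - 0| = v4 := by rw [sub_zero]; exact abs_of_nonneg (((hv0.trans hv1).trans hv2).trans hv3)
  have hx : x ≤ |x| := le_abs_self x
  have b1 : v1 - x ≤ |v1 - x| := le_abs_self _
  have b2 : v2 - x ≤ |v2 - x| := le_abs_self _
  have b3 : v3 - x ≤ |v3 - x| := le_abs_self _
  have b4 : v4 - x ≤ |v4 - x| := le_abs_self _
  rw [h0, a1, a2, a3, a4]
  nlinarith [abs_nonneg x]
end

section
/- Suppose 0 ≤ v₁ ≤ v₂ ≤ v₃ ≤ v₄, τ > 0, and τ_DA = τ_IA = τ. Define T(b₀) = τ|b₀| + (τ/4)·Σᵢ₌₁⁴ |vᵢ − b₀|. Then every b₀ in the interval [0, v₁] is a global minimizer of T, i.e. T is constant on [0, v₁] and T(b₀) ≤ T(x) for all x ∈ ℝ and b₀ ∈ [0, v₁]. -/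
theorem tcmin_boundary_equal_tau
    (τ : ℝ) (v1 v2 v3 v4 : ℝ)
    (hv0 : 0 ≤ v1) (hv1 : v1 ≤ v2) (hv2 : v2 ≤ v3) (hv3 : v3 ≤ v4)
    (hτ : 0 < τ) :
    ∀ b0 ∈ Set.Icc (0:ℝ) v1, ∀ x : ℝ,
      τ * |b0| + (τ/4) * (|v1 - b0| + |v2 - b0| + |v3 - b0| + |v4 - b0|)
        ≤ τ * |x| + (τ/4) * (|v1 - x| + |v2 - x| + |v3 - x| + |v4 - x|) := by
  rintro b0 ⟨hb0, hb1⟩ x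
  rw [abs_of_nonneg hb0, abs_of_nonneg (by linarith : (0:ℝ) ≤ v1 - b0),
    abs_of_nonneg (by linarith : (0:ℝ) ≤ v2 - b0),
    abs_of_nonneg (by linarith : (0:ℝ) ≤ v3 - b0),
    abs_of_nonneg (by linarith : (0:ℝ) ≤ v4 - b0)]
  have h1 : v1 ≤ |x| + |v1 - x| := by
    calc v1 = x + (v1 - x) := by ring
    _ ≤ |x| + |v1 - x| := add_le_add (le_abs_self _) (le_abs_self _)
  have h2 : v2 ≤ |x| + |v2 - x| := by
    calc v2 = x + (v2 - x) := by ring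
    _ ≤ |x| + |v2 - x| := add_le_add (le_abs_self _) (le_abs_self _)
  have h3 : v3 ≤ |x| + |v3 - x| := by
    calc v3 = x + (v3 - x) := by ring
    _ ≤ |x| + |v3 - x| := add_le_add (le_abs_self _) (le_abs_self _)
  have h4 : v4 ≤ |x| + |v4 - x| := by
    calc v4 = x + (v4 - x) := by ring
    _ ≤ |x| + |v4 - x| := add_le_add (le_abs_self _) (le_abs_self _)
  nlinarith [mul_le_mul_of_nonneg_left h1 hτ.le, mul_le_mul_of_nonneg_left h2 hτ.le,
    mul_le_mul_of_nonneg_left h3 hτ.le, mul_le_mul_of_nonneg_left h4 hτ.le]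
end

section
/- Suppose 0 ≤ v₁ ≤ v₂ ≤ v₃ ≤ v₄, τ > 0, and τ_IA = 2τ_DA = 2τ. Define T(b₀) = τ|b₀| + (2τ/4)·Σᵢ₌₁⁴ |vᵢ − b₀|. Then every b₀ in the interval [v₁, v₂] is a global minimizer of T. -/
theorem tcmin_boundary_double_tau
    (τ : ℝ) (v1 v2 v3 v4 : ℝ)
    (hv0 : 0 ≤ v1) (hv1 : v1 ≤ v2) (hv2 : v2 ≤ v3) (hv3 : v3 ≤ v4)
    (hτ : 0 < τ) :
    ∀ b0 ∈ Set.Icc v1 v2, ∀ x : ℝ,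
      τ * |b0| + (2 * τ / 4) * (|v1 - b0| + |v2 - b0| + |v3 - b0| + |v4 - b0|)
        ≤ τ * |x| + (2 * τ / 4) * (|v1 - x| + |v2 - x| + |v3 - x| + |v4 - x|) := by
  intro b0 hb0 x
  obtain ⟨h1, h2⟩ := hb0
  have hb0nn : 0 ≤ b0 := le_trans hv0 h1
  rw [abs_of_nonneg hb0nn, abs_of_nonpos (by linarith : v1 - b0 ≤ 0),
      abs_of_nonneg (by linarith : 0 ≤ v2 - b0),
      abs_of_nonneg (by linarith : 0 ≤ v3 - b0),
      abs_of_nonneg (by linarith : 0 ≤ v4 - b0)]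
  have a0 : x ≤ |x| := le_abs_self x
  have a1 : x - v1 ≤ |v1 - x| := by rw [abs_sub_comm]; exact le_abs_self _
  have a2 : v2 - x ≤ |v2 - x| := le_abs_self _
  have a3 : v3 - x ≤ |v3 - x| := le_abs_self _
  have a4 : v4 - x ≤ |v4 - x| := le_abs_self _
  nlinarith [hτ.le, mul_le_mul_of_nonneg_left a0 hτ.le,
    mul_le_mul_of_nonneg_left a1 hτ.le, mul_le_mul_of_nonneg_left a2 hτ.le,
    mul_le_mul_of_nonneg_left a3 hτ.le, mul_le_mul_of_nonneg_left a4 hτ.le]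
end

section
/- Theorem (optimal risk-neutral trading): Assume no expected market impact, i.e. E[Δᵢ(b̃(b₀))] = 0 for i = 0,…,4 and all b₀, and market efficiency, i.e. E[P₀*] = (1/4)·Σᵢ₌₁⁴ E[Pᵢ*]. Then for the constrained bids b̃(b₀) = (b₀, v₁ − b₀, …, v₄ − b₀), the expected gain satisfies E[G(b̃(b₀))] = C − T(b₀) for a constant C independent of b₀; consequently b₀* maximizes E[G(b̃(·))] if and only if b₀* minimizes the transaction cost T. -/
open MeasureTheory

theorem risk_neutral_optimal_is_tcmin
    {Ω : Type*} [MeasurableSpace Ω] (μ : Measure Ω) [IsProbabilityMeasure μ]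
    (P0 P1 P2 P3 P4 : Ω → ℝ)
    (D0 D1 D2 D3 D4 : ℝ → Ω → ℝ)
    (v1 v2 v3 v4 : ℝ) (τ0 τ1 τ2 τ3 τ4 : ℝ)
    (hτ0 : 0 ≤ τ0) (hτ1 : 0 ≤ τ1) (hτ2 : 0 ≤ τ2) (hτ3 : 0 ≤ τ3) (hτ4 : 0 ≤ τ4)
    (hP0 : Integrable P0 μ) (hP1 : Integrable P1 μ) (hP2 : Integrable P2 μ)
    (hP3 : Integrable P3 μ) (hP4 : Integrable P4 μ)
    (hD0 : ∀ b0, Integrable (D0 b0) μ) (hD1 : ∀ b0, Integrable (D1 b0) μ)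
    (hD2 : ∀ b0, Integrable (D2 b0) μ) (hD3 : ∀ b0, Integrable (D3 b0) μ)
    (hD4 : ∀ b0, Integrable (D4 b0) μ)
    -- no expected market impact
    (hnoimp0 : ∀ b0, ∫ ω, D0 b0 ω ∂μ = 0) (hnoimp1 : ∀ b0, ∫ ω, D1 b0 ω ∂μ = 0)
    (hnoimp2 : ∀ b0, ∫ ω, D2 b0 ω ∂μ = 0) (hnoimp3 : ∀ b0, ∫ ω, D3 b0 ω ∂μ = 0)
    (hnoimp4 : ∀ b0, ∫ ω, D4 b0 ω ∂μ = 0)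
    -- market efficiency
    (hmeff : ∫ ω, P0 ω ∂μ
      = (1/4) * (∫ ω, P1 ω ∂μ + ∫ ω, P2 ω ∂μ + ∫ ω, P3 ω ∂μ + ∫ ω, P4 ω ∂μ))
    -- transaction cost function
    (T : ℝ → ℝ)
    (hT : ∀ b0, T b0 = τ0 * |b0|
      + (1/4) * (τ1 * |v1 - b0| + τ2 * |v2 - b0| + τ3 * |v3 - b0| + τ4 * |v4 - b0|))
    -- expected gain of the constrained bid b̃(b₀)
    (EG : ℝ → ℝ)
    (hEG : ∀ b0, EG b0 =
      (∫ ω, ((P0 ω + D0 b0 ω) * b0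
        + (1/4) * ((P1 ω + D1 b0 ω) * (v1 - b0) + (P2 ω + D2 b0 ω) * (v2 - b0)
          + (P3 ω + D3 b0 ω) * (v3 - b0) + (P4 ω + D4 b0 ω) * (v4 - b0))) ∂μ) - T b0) :
    (∃ C : ℝ, ∀ b0, EG b0 = C - T b0) ∧
    (∀ b0star : ℝ, (∀ x, EG x ≤ EG b0star) ↔ (∀ x, T b0star ≤ T x)) := by

  have key : ∀ b0, EG b0 =
      (1/4) * (v1 * (∫ ω, P1 ω ∂μ) + v2 * (∫ ω, P2 ω ∂μ)
        + v3 * (∫ ω, P3 ω ∂μ) + v4 * (∫ ω, P4 ω ∂μ)) - T b0 := by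
    intro b0
    rw [hEG b0]
    congr 1
    have hfe : (fun ω => ((P0 ω + D0 b0 ω) * b0
        + (1/4) * ((P1 ω + D1 b0 ω) * (v1 - b0) + (P2 ω + D2 b0 ω) * (v2 - b0)
          + (P3 ω + D3 b0 ω) * (v3 - b0) + (P4 ω + D4 b0 ω) * (v4 - b0))))
        = fun ω => b0 * (P0 ω + D0 b0 ω)
          + ((1/4 * (v1 - b0)) * (P1 ω + D1 b0 ω)
          + ((1/4 * (v2 - b0)) * (P2 ω + D2 b0 ω)
          + ((1/4 * (v3 - b0)) * (P3 ω + D3 b0 ω)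
          + (1/4 * (v4 - b0)) * (P4 ω + D4 b0 ω)))) := by
      funext ω; ring
    rw [hfe]
    have i0 : Integrable (fun ω => P0 ω + D0 b0 ω) μ := hP0.add (hD0 b0)
    have i1 : Integrable (fun ω => P1 ω + D1 b0 ω) μ := hP1.add (hD1 b0)
    have i2 : Integrable (fun ω => P2 ω + D2 b0 ω) μ := hP2.add (hD2 b0)
    have i3 : Integrable (fun ω => P3 ω + D3 b0 ω) μ := hP3.add (hD3 b0)
    have i4 : Integrable (fun ω => P4 ω + D4 b0 ω) μ := hP4.add (hD4 b0)
    have e4 : ∫ ω, (1/4 * (v3 - b0) * (P3 ω + D3 b0 ω)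
        + 1/4 * (v4 - b0) * (P4 ω + D4 b0 ω)) ∂μ
        = (∫ ω, 1/4 * (v3 - b0) * (P3 ω + D3 b0 ω) ∂μ)
          + ∫ ω, 1/4 * (v4 - b0) * (P4 ω + D4 b0 ω) ∂μ :=
      integral_add (i3.const_mul _) (i4.const_mul _)
    have e3 : ∫ ω, (1/4 * (v2 - b0) * (P2 ω + D2 b0 ω)
        + (1/4 * (v3 - b0) * (P3 ω + D3 b0 ω) + 1/4 * (v4 - b0) * (P4 ω + D4 b0 ω))) ∂μ
        = (∫ ω, 1/4 * (v2 - b0) * (P2 ω + D2 b0 ω) ∂μ)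
          + ∫ ω, (1/4 * (v3 - b0) * (P3 ω + D3 b0 ω)
            + 1/4 * (v4 - b0) * (P4 ω + D4 b0 ω)) ∂μ :=
      integral_add (i2.const_mul _) ((i3.const_mul _).add (i4.const_mul _))
    have e2 : ∫ ω, (1/4 * (v1 - b0) * (P1 ω + D1 b0 ω)
        + (1/4 * (v2 - b0) * (P2 ω + D2 b0 ω)
        + (1/4 * (v3 - b0) * (P3 ω + D3 b0 ω) + 1/4 * (v4 - b0) * (P4 ω + D4 b0 ω)))) ∂μ
        = (∫ ω, 1/4 * (v1 - b0) * (P1 ω + D1 b0 ω) ∂μ)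
          + ∫ ω, (1/4 * (v2 - b0) * (P2 ω + D2 b0 ω)
            + (1/4 * (v3 - b0) * (P3 ω + D3 b0 ω)
            + 1/4 * (v4 - b0) * (P4 ω + D4 b0 ω))) ∂μ :=
      integral_add (i1.const_mul _)
        ((i2.const_mul _).add ((i3.const_mul _).add (i4.const_mul _)))
    have e1 : ∫ ω, (b0 * (P0 ω + D0 b0 ω)
        + (1/4 * (v1 - b0) * (P1 ω + D1 b0 ω)
        + (1/4 * (v2 - b0) * (P2 ω + D2 b0 ω)
        + (1/4 * (v3 - b0) * (P3 ω + D3 b0 ω) + 1/4 * (v4 - b0) * (P4 ω + D4 b0 ω))))) ∂μ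
        = (∫ ω, b0 * (P0 ω + D0 b0 ω) ∂μ)
          + ∫ ω, (1/4 * (v1 - b0) * (P1 ω + D1 b0 ω)
            + (1/4 * (v2 - b0) * (P2 ω + D2 b0 ω)
            + (1/4 * (v3 - b0) * (P3 ω + D3 b0 ω)
            + 1/4 * (v4 - b0) * (P4 ω + D4 b0 ω)))) ∂μ :=
      integral_add (i0.const_mul _)
        ((i1.const_mul _).add ((i2.const_mul _).add
          ((i3.const_mul _).add (i4.const_mul _))))
    rw [e1, e2, e3, e4, integral_const_mul, integral_const_mul, integral_const_mul,
      integral_const_mul, integral_const_mul,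
      integral_add hP0 (hD0 b0), integral_add hP1 (hD1 b0),
      integral_add hP2 (hD2 b0), integral_add hP3 (hD3 b0),
      integral_add hP4 (hD4 b0),
      hnoimp0, hnoimp1, hnoimp2, hnoimp3, hnoimp4, hmeff]
    ring
  constructor
  · exact ⟨_, key⟩
  · intro b0star
    constructor
    · intro h x
      have := h x
      rw [key x, key b0star] at this
      linarith
    · intro h x
      have := h x
      rw [key x, key b0star]
      linarith
end
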